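/- An AME(4,6) state of minimal support exists if and only if there exist two orthogonal latin squares of order 6. -/
import Mathlib


open scoped BigOperators Classical

noncomputable section

namespace AMEPaper

/-- Combine a configuration on the complement of `B` with a configuration on `B`
into a full configuration on `Fin n`. -/
def combine {n d : ℕ} (B : Finset (Fin n)) (a : {i : Fin n // i ∉ B} → Fin d)
    (b : {i : Fin n // i ∈ B} → Fin d) : Fin n → Fin d :=
  fun i => if h : i ∈ B then b ⟨i, h⟩ else a ⟨i, h⟩

/-- `ψ` is an absolutely maximally entangled state with `n` sites and local dimension `d`:
it is a unit vector and, for every set `B` of at most `n/2` sites, the reduced density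
matrix on `B` equals `d ^ (-|B|)` times the identity. -/
def IsAME (n d : ℕ) (ψ : (Fin n → Fin d) → ℂ) : Prop :=
  (∑ s : Fin n → Fin d, ‖ψ s‖ ^ 2 = 1) ∧
  ∀ B : Finset (Fin n), B.card ≤ n / 2 →
    ∀ b b' : {i : Fin n // i ∈ B} → Fin d,
      (∑ a : {i : Fin n // i ∉ B} → Fin d,
          ψ (combine B a b) * (starRingEnd ℂ) (ψ (combine B a b'))) =
        if b = b' then ((d : ℂ) ^ B.card)⁻¹ else 0

/-- `ψ` has minimal support: its support in the computational basis has exactly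
`d ^ ⌊n/2⌋` elements. -/
def HasMinimalSupport (n d : ℕ) (ψ : (Fin n → Fin d) → ℂ) : Prop :=
  {s : Fin n → Fin d | ψ s ≠ 0}.ncard = d ^ (n / 2)

/-- `C` is an MDS code over the alphabet `Fin d` with wordlength `n` and minimum
Hamming distance `δ`: its minimum distance is exactly `δ` and it meets the Singleton
bound, `|C| = d ^ (n - δ + 1)`. -/
def IsMDSCode (d n δ : ℕ) (C : Finset (Fin n → Fin d)) : Prop :=
  C.card = d ^ (n - δ + 1) ∧
  (∀ w ∈ C, ∀ w' ∈ C, w ≠ w' → δ ≤ hammingDist w w') ∧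
  (∃ w ∈ C, ∃ w' ∈ C, w ≠ w' ∧ hammingDist w w' = δ)

/-- A latin `k`-hypercube of order `d`: fixing all indices but any one of them, the
resulting map `Fin d → Fin d` is a bijection. -/
def IsLatinHypercube (k d : ℕ) (L : (Fin k → Fin d) → Fin d) : Prop :=
  ∀ (i : Fin k) (x : Fin k → Fin d),
    Function.Bijective fun v : Fin d => L (Function.update x i v)

/-- Two latin `k`-hypercubes are orthogonal if for every pair of distinct indices and
all ways of fixing the remaining indices, the two resulting latin squares are
orthogonal. -/
def AreOrthogonalHypercubes (k d : ℕ) (L M : (Fin k → Fin d) → Fin d) : Prop :=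
  ∀ (i j : Fin k), i ≠ j → ∀ x : Fin k → Fin d,
    Function.Injective fun p : Fin d × Fin d =>
      (L (Function.update (Function.update x i p.1) j p.2),
       M (Function.update (Function.update x i p.1) j p.2))

/-- A latin square of order `d`: every row and every column is a bijection. -/
def IsLatinSquare (d : ℕ) (L : Fin d × Fin d → Fin d) : Prop :=
  (∀ i : Fin d, Function.Bijective fun j => L (i, j)) ∧
  (∀ j : Fin d, Function.Bijective fun i => L (i, j))

variable {S : Finset (Fin 4 → Fin 6)}

def Surj2 (S : Finset (Fin 4 → Fin 6)) : Prop :=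
  ∀ i j : Fin 4, i ≠ j → ∀ u v : Fin 6, ∃ s ∈ S, s i = u ∧ s j = v

variable {S : Finset (Fin 4 → Fin 6)}

lemma injOn_proj {S : Finset (Fin 4 → Fin 6)} (hcard : S.card = 36) (hs : Surj2 S)
    {i j : Fin 4} (hij : i ≠ j) :
    Set.InjOn (fun s : Fin 4 → Fin 6 => (s i, s j)) ↑S := by
  apply Finset.injOn_of_card_image_eq
  have : S.image (fun s => (s i, s j)) = Finset.univ := by
    rw [Finset.eq_univ_iff_forall]
    rintro ⟨u, v⟩
    obtain ⟨s, hsS, h1, h2⟩ := hs i j hij u v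
    exact Finset.mem_image.2 ⟨s, hsS, by simp [h1, h2]⟩
  rw [this, hcard]
  simp

lemma fiber2_card {S : Finset (Fin 4 → Fin 6)} (hcard : S.card = 36) (hs : Surj2 S)
    {i j : Fin 4} (hij : i ≠ j) (u v : Fin 6) :
    (S.filter fun s => s i = u ∧ s j = v).card = 1 := by
  obtain ⟨s₀, hs₀, h1, h2⟩ := hs i j hij u v
  rw [Finset.card_eq_one]
  refine ⟨s₀, ?_⟩
  ext s
  simp only [Finset.mem_filter, Finset.mem_singleton]
  constructor
  · rintro ⟨hsS, e1, e2⟩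
    exact injOn_proj hcard hs hij hsS hs₀ (by simp [e1, e2, h1, h2])
  · rintro rfl
    exact ⟨hs₀, h1, h2⟩

lemma fiber1_card {S : Finset (Fin 4 → Fin 6)} (hcard : S.card = 36) (hs : Surj2 S)
    {i : Fin 4} (u : Fin 6) :
    (S.filter fun s => s i = u).card = 6 := by
  obtain ⟨j, hj⟩ := exists_ne i
  have : (S.filter fun s => s i = u).card = (Finset.univ : Finset (Fin 6)).card := by
    apply Finset.card_bij (fun s _ => s j)
    · intros; exact Finset.mem_univ _
    · intro s₁ h₁ s₂ h₂ he
      simp only [Finset.mem_filter] at h₁ h₂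
      exact injOn_proj hcard hs hj.symm h₁.1 h₂.1 (by simp [h₁.2, h₂.2, he])
    · intro v _
      obtain ⟨s, hsS, h1, h2⟩ := hs i j (Ne.symm hj) u v
      exact ⟨s, Finset.mem_filter.2 ⟨hsS, h1⟩, h2⟩
  simpa using this


lemma count_lemma (hcard : S.card = 36)
    (hfib2 : ∀ {i j : Fin 4}, i ≠ j → ∀ u v, (S.filter fun s => s i = u ∧ s j = v).card = 1)
    (hfib1 : ∀ {i : Fin 4} (u : Fin 6), (S.filter fun s => s i = u).card = 6)
    (B : Finset (Fin 4)) (hB : B.card ≤ 2) (b : {i : Fin 4 // i ∈ B} → Fin 6) :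
    ((Finset.univ.filter fun a : {i : Fin 4 // i ∉ B} → Fin 6 => combine B a b ∈ S).card : ℂ)
      * ((6:ℂ)⁻¹ * (6:ℂ)⁻¹) = ((6:ℂ) ^ B.card)⁻¹ := by
  have h012 : B.card = 0 ∨ B.card = 1 ∨ B.card = 2 := by omega
  have key : (Finset.univ.filter fun a : {i : Fin 4 // i ∉ B} → Fin 6 => combine B a b ∈ S).card
      = (S.filter fun s => ∀ i, ∀ h : i ∈ B, s i = b ⟨i, h⟩).card := by
    apply Finset.card_bij (fun a _ => combine B a b)
    · intro a ha
      simp only [Finset.mem_filter, Finset.mem_univ, true_and] at ha ⊢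
      refine ⟨ha, fun i h => ?_⟩
      simp [combine, h]
    · intro a₁ _ a₂ _ he
      funext x
      have := congrFun he x.1
      simpa [combine, x.2] using this
    · intro s hsf
      simp only [Finset.mem_filter] at hsf
      have hc : combine B (fun x : {i : Fin 4 // i ∉ B} => s x.1) b = s := by
        funext x
        by_cases h : x ∈ B
        · simp [combine, h, (hsf.2 x h).symm]
        · simp [combine, h]
      exact ⟨fun x => s x.1, by simp [Finset.mem_filter, hc, hsf.1], hc⟩
  rw [key]
  rcases h012 with h | h | h
  · have hBe : B = ∅ := Finset.card_eq_zero.mp h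
    subst hBe
    have he : (S.filter fun s => ∀ i, ∀ h : i ∈ (∅:Finset (Fin 4)), s i = b ⟨i,h⟩) = S := by
      apply Finset.filter_true_of_mem
      intro s _
      intro i h
      exact absurd h (by simp)
    rw [he, hcard, h]
    norm_num
  · obtain ⟨i, hBi⟩ := Finset.card_eq_one.mp h
    subst hBi
    have hib : i ∈ ({i} : Finset (Fin 4)) := Finset.mem_singleton_self i
    have he : (S.filter fun s => ∀ x, ∀ h : x ∈ ({i}:Finset (Fin 4)), s x = b ⟨x,h⟩)
        = S.filter fun s => s i = b ⟨i, hib⟩ := by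
      apply Finset.filter_congr
      intro s _
      constructor
      · intro hall; exact hall i hib
      · intro he x hx
        have : x = i := Finset.mem_singleton.mp hx
        subst this
        exact he
    rw [he, hfib1, h]
    norm_num
  · obtain ⟨i, j, hij, hBij⟩ := Finset.card_eq_two.mp h
    subst hBij
    have hib : i ∈ ({i,j} : Finset (Fin 4)) := by simp
    have hjb : j ∈ ({i,j} : Finset (Fin 4)) := by simp
    have he : (S.filter fun s => ∀ x, ∀ h : x ∈ ({i,j}:Finset (Fin 4)), s x = b ⟨x,h⟩)
        = S.filter fun s => s i = b ⟨i, hib⟩ ∧ s j = b ⟨j, hjb⟩ := by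
      apply Finset.filter_congr
      intro s _
      constructor
      · intro hall; exact ⟨hall i hib, hall j hjb⟩
      · rintro ⟨h1, h2⟩ x hx
        rcases Finset.mem_insert.mp hx with rfl | hx'
        · exact h1
        · have : x = j := Finset.mem_singleton.mp hx'
          subst this
          exact h2
    rw [he, hfib2 hij, h]
    norm_num

lemma isAME_of (hcard : S.card = 36) (hs : Surj2 S)
    (hinj : ∀ {i j : Fin 4}, i ≠ j →
      Set.InjOn (fun s : Fin 4 → Fin 6 => (s i, s j)) ↑S)
    (hfib2 : ∀ {i j : Fin 4}, i ≠ j → ∀ u v, (S.filter fun s => s i = u ∧ s j = v).card = 1)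
    (hfib1 : ∀ {i : Fin 4} (u : Fin 6), (S.filter fun s => s i = u).card = 6) :
    IsAME 4 6 (fun s => if s ∈ S then (6:ℂ)⁻¹ else 0) ∧
    HasMinimalSupport 4 6 (fun s => if s ∈ S then (6:ℂ)⁻¹ else 0) := by
  refine ⟨⟨?_, ?_⟩, ?_⟩
  · have h1 : ∀ s : Fin 4 → Fin 6,
        ‖(if s ∈ S then (6:ℂ)⁻¹ else 0)‖ ^ 2 = if s ∈ S then (36:ℝ)⁻¹ else 0 := by
      intro s
      split <;> simp <;> norm_num
    calc ∑ s : Fin 4 → Fin 6, ‖(if s ∈ S then (6:ℂ)⁻¹ else 0)‖ ^ 2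
        = ∑ s : Fin 4 → Fin 6, (if s ∈ S then (36:ℝ)⁻¹ else 0) :=
          Finset.sum_congr rfl (fun s _ => h1 s)
      _ = (S.card : ℝ) * 36⁻¹ := by
          rw [Finset.sum_ite_mem, Finset.univ_inter, Finset.sum_const, nsmul_eq_mul]
      _ = 1 := by rw [hcard]; norm_num
  · intro B hB b b'
    have hB2 : B.card ≤ 2 := hB
    by_cases hbb' : b = b'
    · subst hbb'
      rw [if_pos rfl]
      have hconj : ∀ s : Fin 4 → Fin 6,
          (starRingEnd ℂ) (if s ∈ S then (6:ℂ)⁻¹ else 0) = (if s ∈ S then (6:ℂ)⁻¹ else 0) := by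
        intro s; split <;> simp [Complex.conj_ofNat]
      calc (∑ a : {i : Fin 4 // i ∉ B} → Fin 6,
            (if combine B a b ∈ S then (6:ℂ)⁻¹ else 0) *
              (starRingEnd ℂ) (if combine B a b ∈ S then (6:ℂ)⁻¹ else 0))
          = ∑ a : {i : Fin 4 // i ∉ B} → Fin 6,
              (if combine B a b ∈ S then (6:ℂ)⁻¹ * (6:ℂ)⁻¹ else 0) := by
            refine Finset.sum_congr rfl (fun a _ => ?_)
            rw [hconj]
            split <;> simp
        _ = ((Finset.univ.filter fun a : {i : Fin 4 // i ∉ B} → Fin 6 =>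
              combine B a b ∈ S).card : ℂ) * ((6:ℂ)⁻¹ * (6:ℂ)⁻¹) := by
            rw [← Finset.sum_filter, Finset.sum_const, nsmul_eq_mul]
        _ = ((6:ℂ) ^ B.card)⁻¹ := count_lemma hcard hfib2 hfib1 B hB2 b
    · rw [if_neg hbb']
      refine Finset.sum_eq_zero (fun a _ => ?_)
      by_cases h1 : combine B a b ∈ S
      · by_cases h2 : combine B a b' ∈ S
        · exfalso
          apply hbb'
          have hcompl : 1 < Bᶜ.card := by
            have := Finset.card_compl B
            simp only [Fintype.card_fin] at this
            omega
          obtain ⟨i, hi, j, hj, hij⟩ := Finset.one_lt_card.mp hcompl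
          rw [Finset.mem_compl] at hi hj
          have heq : combine B a b = combine B a b' := by
            apply hinj hij h1 h2
            simp [combine, hi, hj]
          funext x
          have := congrFun heq x.1
          simpa [combine, x.2] using this
        · simp [h2]
      · simp [h1]
  · have hset : {s : Fin 4 → Fin 6 | (if s ∈ S then (6:ℂ)⁻¹ else 0) ≠ 0} = ↑S := by
      ext s
      by_cases h : s ∈ S <;> simp [h]
    unfold HasMinimalSupport
    rw [hset, Set.ncard_coe_finset, hcard]
    norm_num

lemma backward (L M : Fin 6 × Fin 6 → Fin 6) (hL : IsLatinSquare 6 L)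
    (hM : IsLatinSquare 6 M)
    (horth : Function.Injective fun p : Fin 6 × Fin 6 => (L p, M p)) :
    ∃ ψ : (Fin 4 → Fin 6) → ℂ, IsAME 4 6 ψ ∧ HasMinimalSupport 4 6 ψ := by
  set S : Finset (Fin 4 → Fin 6) :=
    Finset.univ.filter (fun s => s 2 = L (s 0, s 1) ∧ s 3 = M (s 0, s 1)) with hS
  have hmem : ∀ s : Fin 4 → Fin 6, s ∈ S ↔ s 2 = L (s 0, s 1) ∧ s 3 = M (s 0, s 1) := by
    intro s; simp [hS]
  have hmk : ∀ u v : Fin 6, (![u, v, L (u, v), M (u, v)] : Fin 4 → Fin 6) ∈ S := by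
    intro u v
    rw [hmem]
    constructor <;> rfl
  have hdet : ∀ s ∈ S, ∀ s' ∈ S, s 0 = s' 0 → s 1 = s' 1 → s = s' := by
    intro s hs s' hs' h0 h1
    rw [hmem] at hs hs'
    funext x
    fin_cases x
    · exact h0
    · exact h1
    · show s 2 = s' 2
      rw [hs.1, hs'.1, h0, h1]
    · show s 3 = s' 3
      rw [hs.2, hs'.2, h0, h1]
  have hcard : S.card = 36 := by
    have : S.card = (Finset.univ : Finset (Fin 6 × Fin 6)).card := by
      apply Finset.card_bij (fun s _ => ((s 0 : Fin 6), (s 1 : Fin 6)))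
      · intros; exact Finset.mem_univ _
      · intro s₁ h₁ s₂ h₂ he
        exact hdet s₁ h₁ s₂ h₂ (congrArg Prod.fst he) (congrArg Prod.snd he)
      · rintro ⟨u, v⟩ _
        exact ⟨![u, v, L (u, v), M (u, v)], hmk u v, rfl⟩
    simpa using this
  have hsurj : Surj2 S := by
    have useL2 : ∀ u v : Fin 6, ∃ w, L (u, w) = v := fun u v => (hL.1 u).surjective v
    have useL1 : ∀ u v : Fin 6, ∃ w, L (w, u) = v := fun u v => (hL.2 u).surjective v
    have useM2 : ∀ u v : Fin 6, ∃ w, M (u, w) = v := fun u v => (hM.1 u).surjective v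
    have useM1 : ∀ u v : Fin 6, ∃ w, M (w, u) = v := fun u v => (hM.2 u).surjective v
    have useO : ∀ u v : Fin 6, ∃ x y : Fin 6, L (x, y) = u ∧ M (x, y) = v := by
      intro u v
      obtain ⟨⟨x, y⟩, hp⟩ := (Finite.injective_iff_bijective.mp horth).surjective (u, v)
      exact ⟨x, y, congrArg Prod.fst hp, congrArg Prod.snd hp⟩
    intro i j hij u v
    fin_cases i <;> fin_cases j <;> first
      | exact absurd rfl hij
      | · exact ⟨![u, v, L (u, v), M (u, v)], hmk u v, rfl, rfl⟩
      | · exact ⟨![v, u, L (v, u), M (v, u)], hmk v u, rfl, rfl⟩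
      | · obtain ⟨w, hw⟩ := useL2 u v
          exact ⟨![u, w, L (u, w), M (u, w)], hmk u w, rfl, hw⟩
      | · obtain ⟨w, hw⟩ := useL2 v u
          exact ⟨![v, w, L (v, w), M (v, w)], hmk v w, hw, rfl⟩
      | · obtain ⟨w, hw⟩ := useL1 u v
          exact ⟨![w, u, L (w, u), M (w, u)], hmk w u, rfl, hw⟩
      | · obtain ⟨w, hw⟩ := useL1 v u
          exact ⟨![w, v, L (w, v), M (w, v)], hmk w v, hw, rfl⟩
      | · obtain ⟨w, hw⟩ := useM2 u v
          exact ⟨![u, w, L (u, w), M (u, w)], hmk u w, rfl, hw⟩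
      | · obtain ⟨w, hw⟩ := useM2 v u
          exact ⟨![v, w, L (v, w), M (v, w)], hmk v w, hw, rfl⟩
      | · obtain ⟨w, hw⟩ := useM1 u v
          exact ⟨![w, u, L (w, u), M (w, u)], hmk w u, rfl, hw⟩
      | · obtain ⟨w, hw⟩ := useM1 v u
          exact ⟨![w, v, L (w, v), M (w, v)], hmk w v, hw, rfl⟩
      | · obtain ⟨x, y, hp1, hp2⟩ := useO u v
          exact ⟨![x, y, L (x, y), M (x, y)], hmk x y, hp1, hp2⟩
      | · obtain ⟨x, y, hp1, hp2⟩ := useO v u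
          exact ⟨![x, y, L (x, y), M (x, y)], hmk x y, hp2, hp1⟩
  obtain ⟨h1, h2⟩ := isAME_of hcard hsurj
    (fun hij => injOn_proj hcard hsurj hij)
    (fun hij u v => fiber2_card hcard hsurj hij u v)
    (fun u => fiber1_card hcard hsurj u)
  exact ⟨_, h1, h2⟩

lemma forward (ψ : (Fin 4 → Fin 6) → ℂ) (h : IsAME 4 6 ψ)
    (hmin : HasMinimalSupport 4 6 ψ) :
    ∃ L M : Fin 6 × Fin 6 → Fin 6, IsLatinSquare 6 L ∧ IsLatinSquare 6 M ∧
      Function.Injective fun p : Fin 6 × Fin 6 => (L p, M p) := by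
  classical
  set S : Finset (Fin 4 → Fin 6) := Finset.univ.filter (fun s => ψ s ≠ 0) with hS
  have hmemS : ∀ s, s ∈ S ↔ ψ s ≠ 0 := by intro s; simp [hS]
  have hcard : S.card = 36 := by
    have hset : {s : Fin 4 → Fin 6 | ψ s ≠ 0} = ↑S := by ext s; simp [hS]
    have h2 := hmin
    unfold HasMinimalSupport at h2
    rw [hset, Set.ncard_coe_finset] at h2
    rw [h2]
    norm_num
  have hsurj : Surj2 S := by
    intro i j hij u v
    set B : Finset (Fin 4) := {i, j} with hB
    have hBc : B.card = 2 := Finset.card_pair hij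
    have hiB : i ∈ B := by simp [hB]
    have hjB : j ∈ B := by simp [hB]
    set b : {x : Fin 4 // x ∈ B} → Fin 6 := fun x => if x.1 = i then u else v with hb
    have hsum := h.2 B (by rw [hBc]) b b
    rw [if_pos rfl] at hsum
    have hne : (∑ a : {x : Fin 4 // x ∉ B} → Fin 6,
        ψ (combine B a b) * (starRingEnd ℂ) (ψ (combine B a b))) ≠ 0 := by
      rw [hsum, hBc]
      norm_num
    obtain ⟨a, _, ha⟩ := Finset.exists_ne_zero_of_sum_ne_zero hne
    have hψ : ψ (combine B a b) ≠ 0 := left_ne_zero_of_mul ha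
    refine ⟨combine B a b, (hmemS _).2 hψ, ?_, ?_⟩
    · have : combine B a b i = b ⟨i, hiB⟩ := dif_pos hiB
      rw [this]
      simp [hb]
    · have : combine B a b j = b ⟨j, hjB⟩ := dif_pos hjB
      rw [this]
      simp [hb, hij.symm]
  have hinj : ∀ {i j : Fin 4}, i ≠ j → Set.InjOn (fun s : Fin 4 → Fin 6 => (s i, s j)) ↑S :=
    fun hij => injOn_proj hcard hsurj hij
  have hex : ∀ p : Fin 6 × Fin 6, ∃ s, s ∈ S ∧ s 0 = p.1 ∧ s 1 = p.2 := by
    intro p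
    obtain ⟨s, h1, h2, h3⟩ := hsurj 0 1 (by decide) p.1 p.2
    exact ⟨s, h1, h2, h3⟩
  choose F hFS hF0 hF1 using hex
  have key : ∀ (i : Fin 4), i ≠ 0 → i ≠ 1 → ∀ p q : Fin 6 × Fin 6,
      F p i = F q i → (F p 0 = F q 0 ∨ F p 1 = F q 1) → F p = F q := by
    intro i hi0 hi1 p q he hor
    rcases hor with h0 | h0
    · exact hinj (Ne.symm hi0) (hFS p) (hFS q) (by simp [h0, he])
    · exact hinj (Ne.symm hi1) (hFS p) (hFS q) (by simp [h0, he])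
  have hfeq : ∀ p q : Fin 6 × Fin 6, F p = F q → p = q := by
    intro p q hpq
    have e1 : p.1 = q.1 := by rw [← hF0 p, ← hF0 q, hpq]
    have e2 : p.2 = q.2 := by rw [← hF1 p, ← hF1 q, hpq]
    exact Prod.ext e1 e2
  refine ⟨fun p => F p 2, fun p => F p 3, ⟨?_, ?_⟩, ⟨?_, ?_⟩, ?_⟩
  · intro x
    apply Finite.injective_iff_bijective.mp
    intro y y' he
    have := key 2 (by decide) (by decide) (x, y) (x, y') he
      (Or.inl (by rw [hF0 (x, y), hF0 (x, y')]))
    have := hfeq _ _ this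
    exact (Prod.mk.injEq _ _ _ _).mp this |>.2
  · intro y
    apply Finite.injective_iff_bijective.mp
    intro x x' he
    have := key 2 (by decide) (by decide) (x, y) (x', y) he
      (Or.inr (by rw [hF1 (x, y), hF1 (x', y)]))
    have := hfeq _ _ this
    exact (Prod.mk.injEq _ _ _ _).mp this |>.1
  · intro x
    apply Finite.injective_iff_bijective.mp
    intro y y' he
    have := key 3 (by decide) (by decide) (x, y) (x, y') he
      (Or.inl (by rw [hF0 (x, y), hF0 (x, y')]))
    have := hfeq _ _ this
    exact (Prod.mk.injEq _ _ _ _).mp this |>.2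
  · intro y
    apply Finite.injective_iff_bijective.mp
    intro x x' he
    have := key 3 (by decide) (by decide) (x, y) (x', y) he
      (Or.inr (by rw [hF1 (x, y), hF1 (x', y)]))
    have := hfeq _ _ this
    exact (Prod.mk.injEq _ _ _ _).mp this |>.1
  · intro p q he
    simp only [Prod.mk.injEq] at he
    have : F p = F q :=
      hinj (show (2:Fin 4) ≠ 3 by decide) (hFS p) (hFS q) (by simp [he.1, he.2])
    exact hfeq _ _ this


/-- A minimally supported `AME(4,6)` state exists iff there exist two orthogonal latin
squares of order 6. -/
theorem ame_4_6_iff_orthogonal_latin_squares :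
    (∃ ψ : (Fin 4 → Fin 6) → ℂ, IsAME 4 6 ψ ∧ HasMinimalSupport 4 6 ψ) ↔
      (∃ L M : Fin 6 × Fin 6 → Fin 6,
        IsLatinSquare 6 L ∧ IsLatinSquare 6 M ∧
        Function.Injective fun p : Fin 6 × Fin 6 => (L p, M p)) := by
  constructor
  · rintro ⟨ψ, h1, h2⟩
    exact forward ψ h1 h2
  · rintro ⟨L, M, hL, hM, ho⟩
    exact backward L M hL hM ho

end AMEPaper
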